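/- Let C be a nonzero tensor code of dimension k in 𝔽. If C is k-TBMD with respect to 𝒜^R, then t_k^R(C) = n. -/

import Mathlib

open Module Function

namespace TensorPaper

variable {F : Type*} [Field F] [Fintype F]

/-- The tensor space `𝔽 = 𝔽_q^{n₁} ⊗ ⋯ ⊗ 𝔽_q^{n_r}`, identified with `r`-dimensional arrays. -/
abbrev TSpace (F : Type*) {r : ℕ} (n : Fin r → ℕ) : Type _ := (∀ i, Fin (n i)) → F

/-- The dual code with respect to the standard bilinear form `X*Y = ∑ X_m Y_m`. -/
def dualCode {ι : Type*} [Fintype ι] (C : Submodule F (ι → F)) : Submodule F (ι → F) where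
  carrier := { X | ∀ Y ∈ C, ∑ m, X m * Y m = 0 }
  add_mem' := by
    intro a b ha hb Y hY
    have h1 := ha Y hY
    have h2 := hb Y hY
    simp only [Pi.add_apply, add_mul]
    rw [Finset.sum_add_distrib, h1, h2, add_zero]
  zero_mem' := by
    intro Y _
    simp
  smul_mem' := by
    intro c a ha Y hY
    have h1 := ha Y hY
    simp only [Pi.smul_apply, smul_eq_mul, mul_assoc]
    rw [← Finset.mul_sum, h1, mul_zero]

/-- The array corresponding to a simple (rank-one) tensor `x⁽¹⁾ ⊗ ⋯ ⊗ x⁽ʳ⁾`. -/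
def simpleTensor {r : ℕ} (n : Fin r → ℕ) (x : ∀ i, Fin (n i) → F) : TSpace F n :=
  fun m => ∏ i, x i (m i)

/-- The closure-type anticode `A⁽¹⁾ ⊗ ⋯ ⊗ A⁽ʳ⁾`: the span of all simple tensors whose
`i`-th factor lies in `U i`. -/
def closureAnticode {r : ℕ} (n : Fin r → ℕ) (U : ∀ i, Submodule F (Fin (n i) → F)) :
    Submodule F (TSpace F n) :=
  Submodule.span F { X | ∃ x : ∀ i, Fin (n i) → F, (∀ i, x i ∈ U i) ∧ X = simpleTensor n x }

/-- The family `𝒜^cl` of closure-type anticodes. -/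
def ClosureAnticodes {r : ℕ} (n : Fin r → ℕ) : Set (Submodule F (TSpace F n)) :=
  { A | ∃ U : ∀ i, Submodule F (Fin (n i) → F), A = closureAnticode n U }

/-- The family `𝒜^R` of Ravagnani-type anticodes:
`𝔽^{n₁} ⊗ ⋯ ⊗ A^{(i)} ⊗ ⋯ ⊗ 𝔽^{n_r}` with `n_i = n₁`. -/
def RavagnaniAnticodes {r : ℕ} (n : Fin (r + 2) → ℕ) : Set (Submodule F (TSpace F n)) :=
  { A | ∃ (i : Fin (r + 2)) (U : Submodule F (Fin (n i) → F)),
      n i = n 0 ∧ A = closureAnticode n (Function.update (fun s => ⊤) i U) }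

/-- The family `𝒜^D` of Delsarte-type anticodes:
`𝔽^{n₁} ⊗ ⋯ ⊗ A^{(i)} ⊗ ⋯ ⊗ 𝔽^{n_r}` with `i ≠ p` for some `p` with `n_p = n_r`. -/
def DelsarteAnticodes {r : ℕ} (n : Fin (r + 2) → ℕ) : Set (Submodule F (TSpace F n)) :=
  { A | ∃ (p i : Fin (r + 2)), n p = n (Fin.last (r + 1)) ∧ i ≠ p ∧
      ∃ U : Submodule F (Fin (n i) → F),
        A = closureAnticode n (Function.update (fun s => ⊤) i U) }

/-- The `j`-th tensor weight `t_j^R` of `C` with respect to `𝒜^R`, with the convention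
`t^R({0}) = n + n/n₁`. -/
noncomputable def tR {r : ℕ} (n : Fin (r + 2) → ℕ) (j : ℕ) (C : Submodule F (TSpace F n)) : ℕ := by
  classical exact
    if C = ⊥ then (∏ i, n i) + (∏ i, n i) / n 0
    else sInf { a | ∃ A ∈ RavagnaniAnticodes n, j ≤ finrank F ↥(C ⊓ A) ∧ finrank F ↥A = a }

/-- The `j`-th tensor weight `t_j^D` of `C` with respect to `𝒜^D`. -/
noncomputable def tD {r : ℕ} (n : Fin (r + 2) → ℕ) (j : ℕ) (C : Submodule F (TSpace F n)) : ℕ :=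
  sInf { a | ∃ A ∈ DelsarteAnticodes n, j ≤ finrank F ↥(C ⊓ A) ∧ finrank F ↥A = a }

/-- The `j`-th tensor weight `t_j^cl` of `C` with respect to `𝒜^cl`. -/
noncomputable def tCl {r : ℕ} (n : Fin r → ℕ) (j : ℕ) (C : Submodule F (TSpace F n)) : ℕ :=
  sInf { a | ∃ A ∈ ClosureAnticodes n, j ≤ finrank F ↥(C ⊓ A) ∧ finrank F ↥A = a }

/-- The `j`-th dual tensor weight `s_j^cl` of `C` with respect to the dual anticodes
`𝒜̄^cl = {A^⊥ : A ∈ 𝒜^cl}`. -/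
noncomputable def sCl {r : ℕ} (n : Fin r → ℕ) (j : ℕ) (C : Submodule F (TSpace F n)) : ℕ :=
  sInf { a | ∃ A ∈ ClosureAnticodes n,
    j ≤ finrank F ↥(C ⊓ dualCode A) ∧ finrank F ↥(dualCode A) = a }

/-- `C` is `j`-TMRD with respect to `𝒜^R`: `t_j^R(C) = n − (n/n₁)⌊(n₁/n)(k−j)⌋`. -/
def isTMRD {r : ℕ} (n : Fin (r + 2) → ℕ) (j : ℕ) (C : Submodule F (TSpace F n)) : Prop :=
  tR n j C = (∏ i, n i) - ((∏ i, n i) / n 0) * (n 0 * (finrank F ↥C - j) / ∏ i, n i)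

/-- `C` is `j`-TBMD with respect to `𝒜^R`: `n − t_j^R(C) − t₁^R(C^⊥) < 0`. -/
def isTBMD {r : ℕ} (n : Fin (r + 2) → ℕ) (j : ℕ) (C : Submodule F (TSpace F n)) : Prop :=
  ((∏ i, n i : ℕ) : ℤ) - tR n j C - tR n 1 (dualCode C) < 0

/-- The Gaussian binomial coefficient `[a choose b]_q`, equal to `0` if `a < b`. -/
noncomputable def qBinom (q : ℕ) (a : ℤ) (b : ℕ) : ℚ :=
  if a < (b : ℤ) then 0
  else ∏ i ∈ Finset.range b, ((q : ℚ) ^ (a - i).toNat - 1) / ((q : ℚ) ^ (i + 1) - 1)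

/-- The `(a,j)`-th tensor binomial moment of `C` with respect to `𝒜^R`. -/
noncomputable def BR {r : ℕ} (n : Fin (r + 2) → ℕ) (j : ℕ) (C : Submodule F (TSpace F n))
    (a : ℕ) : ℚ :=
  ∑ᶠ A ∈ (RavagnaniAnticodes n ∩ {A | finrank F ↥A = a}),
    qBinom (Fintype.card F) (finrank F ↥(C ⊓ A)) j

/-- The `(a,j)`-th entry of the weight distribution of `C` with respect to `𝒜^R`. -/
noncomputable def WR {r : ℕ} (n : Fin (r + 2) → ℕ) (j : ℕ) (C : Submodule F (TSpace F n))
    (a : ℕ) : ℚ :=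
  ∑ᶠ A ∈ (RavagnaniAnticodes n ∩ {A | finrank F ↥A = a}),
    (Nat.card {D : Submodule F (TSpace F n) //
      D ≤ C ⊓ A ∧ finrank F ↥D = j ∧
      ∀ B ∈ RavagnaniAnticodes n, D ≤ B → B ≤ A → B = A} : ℚ)

/-- The `(a,j)`-th tensor binomial moment of `C` with respect to `𝒜^D`. -/
noncomputable def BD {r : ℕ} (n : Fin (r + 2) → ℕ) (j : ℕ) (C : Submodule F (TSpace F n))
    (a : ℕ) : ℚ :=
  ∑ᶠ A ∈ (DelsarteAnticodes n ∩ {A | finrank F ↥A = a}),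
    qBinom (Fintype.card F) (finrank F ↥(C ⊓ A)) j

/-- The `(a,j)`-th entry of the weight distribution of `C` with respect to `𝒜^D`. -/
noncomputable def WD {r : ℕ} (n : Fin (r + 2) → ℕ) (j : ℕ) (C : Submodule F (TSpace F n))
    (a : ℕ) : ℚ :=
  ∑ᶠ A ∈ (DelsarteAnticodes n ∩ {A | finrank F ↥A = a}),
    (Nat.card {D : Submodule F (TSpace F n) //
      D ≤ C ⊓ A ∧ finrank F ↥D = j ∧
      ∀ B ∈ DelsarteAnticodes n, D ≤ B → B ≤ A → B = A} : ℚ)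

/-- The `(a,j)`-th normalized tensor binomial moment of `C` with respect to `𝒜^R`. -/
noncomputable def bR {r : ℕ} (n : Fin (r + 2) → ℕ) (j : ℕ) (C : Submodule F (TSpace F n))
    (a : ℤ) : ℚ :=
  if a < 0 then 0
  else if a ≤ ((∏ i, n i : ℕ) : ℤ) - tR n j C - tR n 1 (dualCode C) then
    BR n j C (a.toNat + tR n j C) /
      ((RavagnaniAnticodes (F := F) n ∩ {A | finrank F ↥A = a.toNat + tR n j C}).ncard : ℚ)
  else if ((∏ i, n i : ℕ) : ℤ) ∣ a * n 0 then
    qBinom (Fintype.card F) ((finrank F ↥C : ℤ) + a + tR n j C - (∏ i, n i : ℕ)) j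
  else 0

/-- The `j`-th tensor zeta function of `C` with respect to `𝒜^R`. -/
noncomputable def ZR {r : ℕ} (n : Fin (r + 2) → ℕ) (j : ℕ) (C : Submodule F (TSpace F n)) :
    PowerSeries ℚ :=
  PowerSeries.mk fun a => bR n j C (a : ℤ)

/-- The `q`-Bernstein polynomial `𝓑_{b,a}(X,Y;q)`. -/
noncomputable def qBernstein {R : Type*} [CommRing R] [Algebra ℚ R] (q : ℕ) (b a : ℕ)
    (X Y : R) : R :=
  algebraMap ℚ R (qBinom q (b : ℤ) a) * Y ^ a *
    ∏ c ∈ Finset.range (b - a), (X - (q : R) ^ c * Y)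

/-- The closure-type anticodes with dimension distribution `𝔞`. -/
def closureAnticodesOf {r : ℕ} (n : Fin r → ℕ) (𝔞 : Fin r → ℕ) :
    Set (Submodule F (TSpace F n)) :=
  { A | ∃ U : ∀ i, Submodule F (Fin (n i) → F),
      (∀ i, finrank F ↥(U i) = 𝔞 i) ∧ A = closureAnticode n U }

/-- The refined tensor binomial moment `B_𝔞^{(cl,j)}(C)`. -/
noncomputable def BCl {r : ℕ} (n : Fin r → ℕ) (j : ℕ) (C : Submodule F (TSpace F n))
    (𝔞 : Fin r → ℕ) : ℚ :=
  ∑ᶠ A ∈ closureAnticodesOf n 𝔞, qBinom (Fintype.card F) (finrank F ↥(C ⊓ A)) j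

/-- The refined weight distribution `W_𝔞^{(cl,j)}(C)`. -/
noncomputable def WCl {r : ℕ} (n : Fin r → ℕ) (j : ℕ) (C : Submodule F (TSpace F n))
    (𝔞 : Fin r → ℕ) : ℚ :=
  ∑ᶠ A ∈ closureAnticodesOf n 𝔞,
    (Nat.card {D : Submodule F (TSpace F n) //
      D ≤ C ⊓ A ∧ finrank F ↥D = j ∧
      ∀ B ∈ ClosureAnticodes n, D ≤ B → B ≤ A → B = A} : ℚ)

/-- The refined tensor binomial moment `B_𝔞^{(D,j)}(C)` for Delsarte-type anticodes. -/
noncomputable def BDref {r : ℕ} (n : Fin (r + 2) → ℕ) (j : ℕ) (C : Submodule F (TSpace F n))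
    (𝔞 : Fin (r + 2) → ℕ) : ℚ :=
  ∑ᶠ A ∈ (DelsarteAnticodes n ∩ closureAnticodesOf n 𝔞),
    qBinom (Fintype.card F) (finrank F ↥(C ⊓ A)) j

/-- The refined tensor binomial moment `B_𝔞^{(R,j)}(C)` for Ravagnani-type anticodes. -/
noncomputable def BRref {r : ℕ} (n : Fin (r + 2) → ℕ) (j : ℕ) (C : Submodule F (TSpace F n))
    (𝔞 : Fin (r + 2) → ℕ) : ℚ :=
  ∑ᶠ A ∈ (RavagnaniAnticodes n ∩ closureAnticodesOf n 𝔞),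
    qBinom (Fintype.card F) (finrank F ↥(C ⊓ A)) j

/-- The power series `P(T^m)` obtained from a polynomial `P` by substituting `T^m`. -/
noncomputable def substPow (P : Polynomial ℚ) (m : ℕ) : PowerSeries ℚ :=
  ∑ i ∈ Finset.range (P.natDegree + 1), PowerSeries.C (R := ℚ) (P.coeff i) * PowerSeries.X ^ (m * i)


/-! ### Auxiliary lemmas -/

section AuxStd

variable {ι : Type*} [Fintype ι]

/-- The standard symmetric bilinear form on `ι → F`. -/
noncomputable def stdForm (F : Type*) [Field F] (ι : Type*) [Fintype ι] :
    LinearMap.BilinForm F (ι → F) :=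
  LinearMap.mk₂ F (fun X Y => ∑ m, X m * Y m)
    (fun x y z => by simp [add_mul, Finset.sum_add_distrib])
    (fun c x y => by simp [Finset.mul_sum, mul_assoc])
    (fun x y z => by simp [mul_add, Finset.sum_add_distrib])
    (fun c x y => by simp [Finset.mul_sum, mul_left_comm])

lemma stdForm_apply (X Y : ι → F) : stdForm F ι X Y = ∑ m, X m * Y m := rfl

lemma stdForm_isRefl : (stdForm F ι).IsRefl := by
  intro x y h
  rw [stdForm_apply] at h ⊢
  rw [← h]
  exact Finset.sum_congr rfl fun m _ => mul_comm _ _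

lemma stdForm_nondegenerate [DecidableEq ι] : (stdForm F ι).Nondegenerate := by
  refine ⟨fun x hx => ?_, fun x hx => ?_⟩ <;>
  · funext m
    have := hx (Pi.single m 1)
    simpa [stdForm_apply, Pi.single_apply] using this

lemma dualCode_eq_orthogonal (C : Submodule F (ι → F)) :
    dualCode C = (stdForm F ι).orthogonal C := by
  ext X
  constructor
  · intro h Y hY
    show stdForm F ι Y X = 0
    rw [stdForm_apply, ← h Y hY]
    exact Finset.sum_congr rfl fun m _ => mul_comm _ _
  · intro h Y hY
    have h2 : ∑ m, Y m * X m = 0 := h Y hY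
    show ∑ m, X m * Y m = 0
    rw [← h2]
    exact Finset.sum_congr rfl fun m _ => mul_comm _ _

lemma finrank_dualCode [DecidableEq ι] (C : Submodule F (ι → F)) :
    finrank F ↥(dualCode C) = Fintype.card ι - finrank F ↥C := by
  rw [dualCode_eq_orthogonal,
    LinearMap.BilinForm.finrank_orthogonal stdForm_nondegenerate,
    Module.finrank_pi]

lemma dualCode_anti {C D : Submodule F (ι → F)} (h : C ≤ D) : dualCode D ≤ dualCode C :=
  fun X hX Y hY => hX Y (h hY)

lemma dualCode_ne_bot [DecidableEq ι] {C : Submodule F (ι → F)} (h : C ≠ ⊤) :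
    dualCode C ≠ ⊥ := by
  intro hb
  have h1 := finrank_dualCode C
  rw [hb, finrank_bot] at h1
  have h2 : finrank F ↥C < Fintype.card ι := by
    have := Submodule.finrank_lt (K := F) h
    rwa [Module.finrank_pi] at this
  omega

end AuxStd

section AuxTensor

variable {r : ℕ} {n : Fin r → ℕ}

lemma pairing_simpleTensor (x y : ∀ i, Fin (n i) → F) :
    ∑ m, simpleTensor n x m * simpleTensor n y m = ∏ i, ∑ j, x i j * y i j := by
  rw [Finset.prod_univ_sum, Fintype.piFinset_univ]
  exact Finset.sum_congr rfl fun m _ => by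
    rw [simpleTensor, simpleTensor, ← Finset.prod_mul_distrib]

lemma closureAnticode_top : closureAnticode n (fun _ => (⊤ : Submodule F _)) = ⊤ := by
  rw [eq_top_iff]
  intro X _
  have hX : X = ∑ m, X m • simpleTensor n (fun i j => if j = m i then (1 : F) else 0) := by
    funext m'
    rw [Finset.sum_apply, Finset.sum_eq_single m']
    · simp [simpleTensor]
    · intro m _ hm
      obtain ⟨i, hi⟩ := Function.ne_iff.mp hm
      have : (∏ i, if m' i = m i then (1 : F) else 0) = 0 :=
        Finset.prod_eq_zero (Finset.mem_univ i) (if_neg fun h => hi h.symm)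
      simp [simpleTensor, this]
    · simp
  rw [hX]
  exact Submodule.sum_mem _ fun m _ => Submodule.smul_mem _ _
    (Submodule.subset_span ⟨_, fun i => Submodule.mem_top, rfl⟩)

lemma closureAnticode_eq_span (U : ∀ i, Submodule F (Fin (n i) → F)) :
    closureAnticode n U = Submodule.span F
      { X | ∃ x : ∀ i, Fin (n i) → F, (∀ i, x i ∈ U i) ∧ X = simpleTensor n x } := rfl

lemma anticode_le_dualCode (i : Fin r) (U V : Submodule F (Fin (n i) → F))
    (hUV : ∀ v ∈ V, ∀ u ∈ U, ∑ j, v j * u j = 0) :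
    closureAnticode n (Function.update (fun _ => ⊤) i V) ≤
      dualCode (closureAnticode n (Function.update (fun _ => ⊤) i U)) := by
  refine Submodule.span_le.mpr ?_
  rintro X ⟨x, hx, rfl⟩
  intro Y hY
  rw [closureAnticode_eq_span] at hY
  induction hY using Submodule.span_induction with
  | mem Y hYmem =>
    obtain ⟨y, hy, rfl⟩ := hYmem
    rw [pairing_simpleTensor]
    refine Finset.prod_eq_zero (Finset.mem_univ i) ?_
    have hxi : x i ∈ V := by have := hx i; rwa [Function.update_self] at this
    have hyi : y i ∈ U := by have := hy i; rwa [Function.update_self] at this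
    exact hUV _ hxi _ hyi
  | zero => simp
  | add a b _ _ ha hb => simp [mul_add, Finset.sum_add_distrib, ha, hb]
  | smul c a _ ha =>
    simp only [Pi.smul_apply, smul_eq_mul, mul_left_comm, ← Finset.mul_sum, ha, mul_zero]

end AuxTensor

/-- If a nonzero code `C` is `k`-TBMD w.r.t. `𝒜^R`, then `t_k^R(C) = n`. -/
theorem stmt6 {F : Type*} [Field F] [Fintype F] (r : ℕ) (n : Fin (r + 2) → ℕ)
    (hn1 : 2 ≤ n 0) (hmin : ∀ i, n 0 ≤ n i) (hmax : ∀ i, n i ≤ n (Fin.last (r + 1)))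
    (C : Submodule F (TSpace F n)) (hC : C ≠ ⊥)
    (h : isTBMD n (finrank F ↥C) C) :
    tR n (finrank F ↥C) C = ∏ i, n i := by
  classical
  set k := finrank F ↥C with hk
  set N := ∏ i, n i with hN
  have hcard : Fintype.card (∀ i, Fin (n i)) = N := by
    simp [Fintype.card_pi, hN]
  have hfr : finrank F (TSpace F n) = N := by
    rw [Module.finrank_pi, hcard]
  -- the whole space is a Ravagnani anticode
  have hTop : (⊤ : Submodule F (TSpace F n)) ∈ RavagnaniAnticodes n := by
    refine ⟨0, ⊤, rfl, ?_⟩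
    rw [show (Function.update (fun s => (⊤ : Submodule F (Fin (n s) → F))) 0 ⊤) =
      fun _ => ⊤ from Function.update_eq_self 0 _, closureAnticode_top]
  have hNmem : N ∈ { a | ∃ A ∈ RavagnaniAnticodes n,
      k ≤ finrank F ↥(C ⊓ A) ∧ finrank F ↥A = a } := by
    refine ⟨⊤, hTop, ?_, ?_⟩
    · rw [inf_top_eq]
    · rw [finrank_top, hfr]
  have htRdef : tR n k C = sInf { a | ∃ A ∈ RavagnaniAnticodes n,
      k ≤ finrank F ↥(C ⊓ A) ∧ finrank F ↥A = a } := by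
    simp only [tR, if_neg hC]
  have hle : tR n k C ≤ N := htRdef ▸ Nat.sInf_le hNmem
  refine le_antisymm hle ?_
  by_contra hlt
  push_neg at hlt
  -- so `tR n k C < N`; extract a minimizing anticode
  have hmem := Nat.sInf_mem ⟨N, hNmem⟩
  rw [← htRdef] at hmem
  obtain ⟨A, hARav, hkA, hadim⟩ := hmem
  obtain ⟨i, U, hni, hAeq⟩ := hARav
  -- `C ≤ A`
  have hCA : C ≤ A := by
    have h1 : C ⊓ A = C := by
      refine Submodule.eq_of_le_of_finrank_le inf_le_left ?_
      exact le_trans hkA (le_refl _)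
    exact h1 ▸ inf_le_right
  -- `U ≠ ⊤`
  have hAlt : finrank F ↥A < N := hadim.symm ▸ hlt
  have hUne : U ≠ ⊤ := by
    rintro rfl
    rw [show (Function.update (fun s => (⊤ : Submodule F (Fin (n s) → F))) i ⊤) =
      fun _ => ⊤ from Function.update_eq_self i _, closureAnticode_top] at hAeq
    rw [hAeq, finrank_top, hfr] at hAlt
    exact lt_irrefl _ hAlt
  -- the dual anticode `B`
  set V := dualCode U with hV
  have hVne : V ≠ ⊥ := dualCode_ne_bot hUne
  obtain ⟨v, hvV, hvne⟩ := Submodule.exists_mem_ne_zero_of_ne_bot hVne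
  set B := closureAnticode n (Function.update (fun s => (⊤ : Submodule F (Fin (n s) → F))) i V)
    with hB
  have hBRav : B ∈ RavagnaniAnticodes n := ⟨i, V, hni, rfl⟩
  have hBle : B ≤ dualCode A := by
    rw [hAeq]
    exact anticode_le_dualCode i U V (fun w hw u hu => hw u hu)
  -- `B` is nonzero: it contains a nonzero simple tensor
  have hnpos : ∀ s, 0 < n s := fun s => lt_of_lt_of_le (lt_of_lt_of_le two_pos hn1) (hmin s)
  have hBne : B ≠ ⊥ := by
    rw [Submodule.ne_bot_iff]
    set x : ∀ s, Fin (n s) → F := Function.update (fun s => fun _ => (1 : F)) i v with hx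
    refine ⟨simpleTensor n x, ?_, ?_⟩
    · refine Submodule.subset_span ⟨x, fun s => ?_, rfl⟩
      rcases eq_or_ne s i with rfl | hs
      · rw [Function.update_self, hx, Function.update_self]; exact hvV
      · rw [Function.update_of_ne hs]; exact Submodule.mem_top
    · obtain ⟨j0, hj0⟩ := Function.ne_iff.mp hvne
      set m : ∀ s, Fin (n s) := Function.update (fun s => (⟨0, hnpos s⟩ : Fin (n s))) i j0
        with hm
      have hXm : simpleTensor n x m = v j0 := by
        rw [simpleTensor, Finset.prod_eq_single_of_mem i (Finset.mem_univ i)]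
        · rw [hx, Function.update_self, hm, Function.update_self]
        · intro s _ hs
          rw [hx, Function.update_of_ne hs]
      intro h0
      apply hj0
      rw [← hXm, h0]
      rfl
  -- `dualCode C` is nonzero
  have hBleC : B ≤ dualCode C := le_trans hBle (dualCode_anti hCA)
  have hDne : dualCode C ≠ ⊥ := by
    intro hb
    exact hBne (le_bot_iff.mp (hb ▸ hBleC))
  -- bound `tR n 1 (dualCode C)`
  have hBfr : finrank F ↥B ≤ N - finrank F ↥A := by
    have h1 : finrank F ↥B ≤ finrank F ↥(dualCode A) := Submodule.finrank_mono hBle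
    rwa [finrank_dualCode, hcard] at h1
  have ht1 : tR n 1 (dualCode C) ≤ N - finrank F ↥A := by
    have htd : tR n 1 (dualCode C) = sInf { a | ∃ A ∈ RavagnaniAnticodes n,
        1 ≤ finrank F ↥(dualCode C ⊓ A) ∧ finrank F ↥A = a } := by
      simp only [tR, if_neg hDne]
    have hmemB : finrank F ↥B ∈ { a | ∃ A ∈ RavagnaniAnticodes n,
        1 ≤ finrank F ↥(dualCode C ⊓ A) ∧ finrank F ↥A = a } := by
      refine ⟨B, hBRav, ?_, rfl⟩
      rw [inf_eq_right.mpr hBleC]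
      exact Nat.one_le_iff_ne_zero.mpr fun h0 => hBne (Submodule.finrank_eq_zero.mp h0)
    exact le_trans (htd ▸ Nat.sInf_le hmemB) hBfr
  -- contradiction with TBMD
  rw [isTBMD] at h
  rw [htRdef] at hadim
  rw [htRdef, ← hadim] at h
  omega

end TensorPaper
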